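/- Let (T̂, {B_x}) be the r-rooted cut decomposition of a digraph H. For every vertex u ∈ V(H) and every set X ⊆ V(H) \ (V(T̂) ∪ {u}) of non-bottleneck vertices, there exists a directed path P from r to u in H such that |V(P) ∩ X| ≤ |X|/2. -/

import Mathlib

/-!
A vertex `u` of the diblock `B x` is reached from `x` inside `B*_x` by two internally disjoint
paths (which coincide when `u` is `x` or an out-neighbour of `x`), and the lighter of them meets
at most half of the `X`-vertices lying on either. These vertices lie in `B*_x` but outside the
partition class of `u`; when `u` is a child of `x` this means outside `B*_u`. Walking down the
decomposition tree from `r` to a node whose diblock contains `u`, the halves charged at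
successive steps therefore come from disjoint parts of `X`, and the resulting walk is shortened
to a path.
-/

namespace CutPaper

variable {V : Type*}

/-- A directed path in the digraph `A`, given as a nonempty list of distinct
vertices from `u` to `v` with consecutive vertices joined by arcs. -/
def IsPath (A : V → V → Prop) (p : List V) (u v : V) : Prop :=
  p.Chain' A ∧ p.head? = some u ∧ p.getLast? = some v ∧ p.Nodup

/-- `v` is reachable from `u` in the digraph `A`. -/
def Reaches (A : V → V → Prop) (u v : V) : Prop := ∃ p, IsPath A p u v

/-- Two paths from `r` to `v` are internally disjoint: they share only `r` and `v`. -/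
def IntDisj (p q : List V) (r v : V) : Prop :=
  ∀ x, x ∈ p → x ∈ q → x = r ∨ x = v

/-- `v` is bi-reachable from `r`: there are two (distinct) internally
vertex-disjoint paths from `r` to `v`. -/
def BiReachable (A : V → V → Prop) (r v : V) : Prop :=
  ∃ p q, p ≠ q ∧ IsPath A p r v ∧ IsPath A q r v ∧ IntDisj p q r v

/-- The diblock of `r`: bi-reachable vertices together with `r` and its out-neighbours. -/
def diblock (A : V → V → Prop) (r : V) : Set V :=
  {v | BiReachable A r v} ∪ {r} ∪ {v | A r v}

/-- The subdigraph of `A` induced on a vertex set `S`. -/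
def Asub (A : V → V → Prop) (S : Set V) : V → V → Prop :=
  fun u v => A u v ∧ u ∈ S ∧ v ∈ S

/-- The path `p` meets the set `B` for the last time in `x`. -/
def LastTouch (B : Set V) (p : List V) (x : V) : Prop :=
  ∃ p₁ p₂, p = p₁ ++ x :: p₂ ∧ x ∈ B ∧ ∀ y ∈ p₂, y ∉ B

/-- `T` is an out-tree with vertex set `S` and root `r`, as a subdigraph of `A`. -/
structure IsOutTree (A T : V → V → Prop) (S : Set V) (r : V) : Prop where
  sub : ∀ u v, T u v → A u v
  mem : ∀ u v, T u v → u ∈ S ∧ v ∈ S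
  root_mem : r ∈ S
  no_in_root : ∀ u, ¬ T u r
  unique_in : ∀ v ∈ S, v ≠ r → ∃! u, T u v
  reach : ∀ v ∈ S, Reaches T r v

/-- `T` is an in-tree with vertex set `S` and root `r`, as a subdigraph of `A`. -/
def IsInTree (A T : V → V → Prop) (S : Set V) (r : V) : Prop :=
  IsOutTree (fun u v => A v u) (fun u v => T v u) S r

/-- The leaves (vertices of out-degree zero) of an out-tree `T` on vertex set `S`. -/
def leaves (T : V → V → Prop) (S : Set V) : Set V :=
  {v | v ∈ S ∧ ∀ u, ¬ T v u}

/-- The leaves (vertices of in-degree zero) of an in-tree `T` on vertex set `S`. -/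
def inLeaves (T : V → V → Prop) (S : Set V) : Set V :=
  {v | v ∈ S ∧ ∀ u, ¬ T u v}

/-- The raw data of a rooted cut decomposition: a node set, a parent map,
and an assignment of diblocks to nodes. -/
structure PreDecomp (V : Type*) where
  N : Set V
  parent : V → V
  B : V → Set V

/-- One step up the decomposition tree rooted at `r`. -/
def Step (d : PreDecomp V) (r : V) (a b : V) : Prop :=
  a ∈ d.N ∧ a ≠ r ∧ d.parent a = b

/-- `x` is an ancestor (not necessarily proper) of `y` in the decomposition tree. -/
def Anc (d : PreDecomp V) (r : V) (x y : V) : Prop :=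
  Relation.ReflTransGen (Step d r) y x

/-- `y` is a child of `x` in the decomposition tree. -/
def IsChild (d : PreDecomp V) (r : V) (y x : V) : Prop :=
  y ∈ d.N ∧ y ≠ r ∧ d.parent y = x

/-- `B*_x`: the union of the diblocks over the subtree rooted at `x`. -/
def Bstar (d : PreDecomp V) (r : V) (x : V) : Set V :=
  {v | ∃ y ∈ d.N, Anc d r x y ∧ v ∈ d.B y}

/-- The partition class `X_y` of a bottleneck `y` of the diblock of `x`
inside `B*_x`: the vertices below `B x` whose access paths from `x`
leave `B x` for the last time at `y`. -/
def PartClass (A : V → V → Prop) (d : PreDecomp V) (r x y : V) : Set V :=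
  {v | v ∈ Bstar d r x ∧ v ∉ d.B x ∧
    ∀ p, IsPath (Asub A (Bstar d r x)) p x v → LastTouch (d.B x) p y}

/-- `d` is the `r`-rooted cut decomposition of the digraph `A`:
the tree is well-founded towards the root `r`, the diblocks cover all vertices,
each `B x` is the diblock of `x` in the subdigraph induced on `B*_x`,
the children of `x` are exactly the bottlenecks of `B x`, and the subtree of a
child `y` spans exactly `{y}` together with the partition class of `y`. -/
structure IsCutDecomp (A : V → V → Prop) (r : V) (d : PreDecomp V) : Prop where
  root_mem : r ∈ d.N
  parent_mem : ∀ x ∈ d.N, x ≠ r → d.parent x ∈ d.N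
  tree : ∀ x ∈ d.N, Anc d r r x
  cover : Bstar d r r = Set.univ
  diblock_eq : ∀ x ∈ d.N, d.B x = diblock (Asub A (Bstar d r x)) x
  child_iff : ∀ x ∈ d.N, ∀ y,
    IsChild d r y x ↔ (y ∈ d.B x ∧ y ≠ x ∧ (PartClass A d r x y).Nonempty)
  child_part : ∀ x ∈ d.N, ∀ y, IsChild d r y x →
    Bstar d r y = insert y (PartClass A d r x y)

section Walks

variable {A : V → V → Prop}

def IsWalk (A : V → V → Prop) (p : List V) (u v : V) : Prop :=
  p.IsChain A ∧ p.head? = some u ∧ p.getLast? = some v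

lemma IsPath.isWalk {p : List V} {u v : V} (h : IsPath A p u v) : IsWalk A p u v :=
  ⟨h.1, h.2.1, h.2.2.1⟩

lemma IsWalk.mono {A' : V → V → Prop} (hA : ∀ a b, A a b → A' a b) {p : List V} {u v : V}
    (h : IsWalk A p u v) : IsWalk A' p u v :=
  ⟨List.IsChain.imp hA h.1, h.2⟩

lemma IsWalk.append {p q : List V} {a b c : V} (hp : IsWalk A p a b) (hq : IsWalk A q b c) :
    IsWalk A (p ++ q.tail) a c := by
  obtain ⟨hpc, hph, hpl⟩ := hp
  obtain ⟨hqc, hqh, hql⟩ := hq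
  rw [List.eq_cons_of_mem_head? hqh] at hqc hql
  refine ⟨List.IsChain.append hpc hqc.tail ?_, by simp [hph], ?_⟩
  · rw [hpl]
    intro x hx y hy
    obtain rfl := Option.mem_some_iff.mp hx
    exact hqc.rel_head? hy
  · cases ht : q.tail with
    | nil => simp_all
    | cons y t => simp_all [List.getLast?_cons]

lemma IsPath.takeUntil {l₁ l₂ : List V} {u v w : V} (h : IsPath A (l₁ ++ v :: l₂) u w) :
    IsPath A (l₁ ++ [v]) u v := by
  obtain ⟨hc, hh, -, hnd⟩ := h
  have hpre : l₁ ++ [v] <+: l₁ ++ v :: l₂ := ⟨l₂, by simp⟩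
  refine ⟨List.IsChain.prefix hc hpre, ?_, List.getLast?_concat, hnd.sublist hpre.sublist⟩
  cases l₁ <;> simpa using hh

lemma IsPath.dropUntil {l₁ l₂ : List V} {u v w : V} (h : IsPath A (l₁ ++ v :: l₂) u w) :
    IsPath A (v :: l₂) v w := by
  obtain ⟨hc, -, hl, hnd⟩ := h
  have hsuf : v :: l₂ <:+ l₁ ++ v :: l₂ := List.suffix_append l₁ _
  exact ⟨List.IsChain.suffix hc hsuf, rfl, by rwa [List.getLast?_append_cons] at hl,
    hnd.sublist hsuf.sublist⟩

lemma IsPath.cons {p : List V} {u v w : V} (h : IsPath A p v w) (huv : A u v) (hu : u ∉ p) :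
    IsPath A (u :: p) u w := by
  obtain ⟨hc, hh, hl, hnd⟩ := h
  rw [List.eq_cons_of_mem_head? hh] at hc hl hnd hu ⊢
  exact ⟨hc.cons_cons huv, rfl, by simpa using hl, List.nodup_cons.mpr ⟨hu, hnd⟩⟩

lemma IsWalk.exists_isPath {p : List V} {u v : V} (h : IsWalk A p u v) :
    ∃ q, IsPath A q u v ∧ q ⊆ p := by
  induction p generalizing u with
  | nil => simp [IsWalk] at h
  | cons x t ih =>
    obtain ⟨hc, hh, hl⟩ := h
    obtain rfl : x = u := by simpa using hh
    cases t with
    | nil => exact ⟨[x], ⟨hc, rfl, hl, List.nodup_singleton x⟩, List.Subset.refl _⟩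
    | cons y t =>
      rw [List.isChain_cons_cons] at hc
      obtain ⟨q, hq, hqt⟩ := ih ⟨hc.2, rfl, by simpa using hl⟩
      by_cases hx : x ∈ q
      · obtain ⟨q₁, q₂, rfl⟩ := List.append_of_mem hx
        exact ⟨x :: q₂, hq.dropUntil,
          fun z hz => List.mem_cons_of_mem _ (hqt (List.mem_append_right _ hz))⟩
      · exact ⟨x :: q, hq.cons hc.1 hx, List.cons_subset_cons _ hqt⟩

lemma IsPath.mem_or_mem_of_asub {S : Set V} {p : List V} {u v w : V}
    (h : IsPath (Asub A S) p u v) (hw : w ∈ p) : w = u ∨ w ∈ S := by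
  refine List.IsChain.induction (fun z => z = u ∨ z ∈ S) p h.1
    (fun _ _ hab _ => Or.inr hab.2.2) (fun hne => Or.inl ?_) w hw
  simpa [List.head?_eq_some_head hne] using h.2.1

lemma isPath_singleton (x : V) : IsPath A [x] x x :=
  ⟨List.IsChain.singleton x, rfl, rfl, List.nodup_singleton x⟩

end Walks

lemma finite_sep_mem (X : Set V) (p : List V) : {v ∈ X | v ∈ p}.Finite :=
  (List.finite_toSet p).subset fun _ hv => hv.2

lemma ncard_sep_mem_append_tail_le (X : Set V) (p q : List V) :
    {v ∈ X | v ∈ p ++ q.tail}.ncard ≤ {v ∈ X | v ∈ p}.ncard + {v ∈ X | v ∈ q}.ncard := by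
  refine (Set.ncard_le_ncard ?_ ((finite_sep_mem X p).union (finite_sep_mem X q))).trans
    (Set.ncard_union_le _ _)
  rintro v ⟨hvX, hv⟩
  rcases List.mem_append.mp hv with hp | hq
  · exact .inl ⟨hvX, hp⟩
  · exact .inr ⟨hvX, List.mem_of_mem_tail hq⟩

lemma ncard_sep_mem_le_of_subset (X : Set V) {p q : List V} (hpq : p ⊆ q) :
    {v ∈ X | v ∈ p}.ncard ≤ {v ∈ X | v ∈ q}.ncard :=
  Set.ncard_le_ncard (fun _ hv => ⟨hv.1, hpq hv.2⟩) (finite_sep_mem X q)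

lemma IntDisj.ncard_add_ncard {X : Set V} {p q : List V} {u v : V} (h : IntDisj p q u v)
    (hu : u ∉ X) (hv : v ∉ X) :
    {w ∈ X | w ∈ p}.ncard + {w ∈ X | w ∈ q}.ncard = {w ∈ X | w ∈ p ∨ w ∈ q}.ncard := by
  rw [← Set.ncard_union_eq _ (finite_sep_mem X p) (finite_sep_mem X q)]
  · congr 1
    ext w
    simp only [Set.mem_union, Set.mem_ofPred_eq, and_or_left]
  · rw [Set.disjoint_left]
    rintro w ⟨hwX, hwp⟩ ⟨-, hwq⟩
    rcases h w hwp hwq with rfl | rfl <;> contradiction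

/-- For `x` itself and its out-neighbours the two paths coincide. -/
lemma exists_intDisj_of_mem_diblock {A : V → V → Prop} {x u : V} (hu : u ∈ diblock A x) :
    ∃ p q, IsPath A p x u ∧ IsPath A q x u ∧ IntDisj p q x u := by
  have of_eq : u = x → ∃ p q, IsPath A p x u ∧ IsPath A q x u ∧ IntDisj p q x u := by
    rintro rfl
    exact ⟨[u], [u], isPath_singleton u, isPath_singleton u,
      fun w hw _ => .inl (List.mem_singleton.mp hw)⟩
  rcases hu with (⟨p, q, -, hp, hq, hpq⟩ | hux) | hxu
  · exact ⟨p, q, hp, hq, hpq⟩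
  · exact of_eq hux
  · by_cases hux : u = x
    · exact of_eq hux
    have hpath : IsPath A [x, u] x u :=
      ⟨List.IsChain.cons_cons hxu (List.IsChain.singleton u), rfl, rfl, by simpa using Ne.symm hux⟩
    exact ⟨[x, u], [x, u], hpath, hpath, fun w hw _ => by simpa using hw⟩

lemma exists_walk_two_mul_ncard_le_of_mem_diblock {A : V → V → Prop} {S Y X : Set V} {x u : V}
    [Finite V] (hu : u ∈ diblock (Asub A S) x) (hxX : x ∉ X) (huX : u ∉ X)
    (hY : ∀ p, IsPath (Asub A S) p x u → ∀ v ∈ p, v ∉ Y) :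
    ∃ s, IsWalk A s x u ∧ 2 * {v ∈ X | v ∈ s}.ncard ≤ ((X \ Y) ∩ S).ncard := by
  obtain ⟨p, q, hp, hq, hpq⟩ := exists_intDisj_of_mem_diblock hu
  have hsum := hpq.ncard_add_ncard hxX huX
  have hbound : {w ∈ X | w ∈ p ∨ w ∈ q}.ncard ≤ ((X \ Y) ∩ S).ncard := by
    refine Set.ncard_le_ncard ?_
    have mem {s : List V} (hs : IsPath (Asub A S) s x u) {w : V} (hwX : w ∈ X) (hw : w ∈ s) :
        w ∈ (X \ Y) ∩ S :=
      ⟨⟨hwX, hY s hs w hw⟩, (hs.mem_or_mem_of_asub hw).resolve_left fun h => hxX (h ▸ hwX)⟩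
    rintro w ⟨hwX, hw | hw⟩
    exacts [mem hp hwX hw, mem hq hwX hw]
  rcases le_total {v ∈ X | v ∈ p}.ncard {v ∈ X | v ∈ q}.ncard with hle | hle
  · exact ⟨p, hp.isWalk.mono fun _ _ h => h.1, by omega⟩
  · exact ⟨q, hq.isWalk.mono fun _ _ h => h.1, by omega⟩

lemma ncard_sdiff_add_ncard_sdiff_inter_of_subset [Finite V] {X Y B : Set V} (hYB : Y ⊆ B) :
    (X \ B).ncard + ((X \ Y) ∩ B).ncard = (X \ Y).ncard := by
  rw [add_comm, ← Set.ncard_inter_add_ncard_sdiff_eq_ncard (X \ Y) B, Set.sdiff_sdiff,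
    Set.union_eq_right.mpr hYB]

section Decomposition

variable {A : V → V → Prop} {r : V} {d : PreDecomp V}

/-- If `v` were in the partition class of `y`, the part of the path up to `v` would leave `B x`
for the last time at `y`, so `y` would occur on the path twice. -/
lemma IsPath.notMem_partClass {x y v : V} {p : List V} (hy : y ∈ d.B x)
    (hp : IsPath (Asub A (Bstar d r x)) p x y) (hv : v ∈ p) : v ∉ PartClass A d r x y := by
  rintro ⟨-, hvB, hlast⟩
  obtain ⟨l₁, l₂, rfl⟩ := List.append_of_mem hv
  obtain ⟨a, b, hab, -, -⟩ := hlast _ hp.takeUntil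
  have hy₁ : y ∈ l₁ := by
    have : y ∈ l₁ ++ [v] := hab ▸ List.mem_append_right a List.mem_cons_self
    rcases List.mem_append.mp this with h | h
    · exact h
    · exact absurd (List.mem_singleton.mp h ▸ hy) hvB
  have hy₂ : y ∈ v :: l₂ := by
    have hlast := hp.2.2.1
    rw [List.getLast?_append_cons] at hlast
    exact List.mem_of_getLast? hlast
  exact List.disjoint_of_nodup_append hp.2.2.2 hy₁ hy₂

variable [Finite V] {X : Set V}

lemma IsCutDecomp.exists_walk_of_mem_B (h : IsCutDecomp A r d) {x u : V} (hx : x ∈ d.N)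
    (hxX : x ∉ X) (hu : u ∈ d.B x) (huX : u ∉ X) :
    ∃ s, IsWalk A s x u ∧
      2 * {v ∈ X | v ∈ s}.ncard ≤ ((X \ PartClass A d r x u) ∩ Bstar d r x).ncard :=
  exists_walk_two_mul_ncard_le_of_mem_diblock (h.diblock_eq x hx ▸ hu) hxX huX
    fun _ hp _ hv => hp.notMem_partClass hu hv

lemma IsCutDecomp.exists_walk_extend (h : IsCutDecomp A r d) (hXN : ∀ v ∈ X, v ∉ d.N)
    {x u : V} (hx : x ∈ d.N) {p : List V} (hp : IsWalk A p r x)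
    (hpX : 2 * {v ∈ X | v ∈ p}.ncard ≤ (X \ Bstar d r x).ncard) (hu : u ∈ d.B x) (huX : u ∉ X) :
    ∃ q, IsWalk A q r u ∧ 2 * {v ∈ X | v ∈ q}.ncard ≤ (X \ PartClass A d r x u).ncard := by
  obtain ⟨s, hs, hsX⟩ := h.exists_walk_of_mem_B hx (fun hxX => hXN x hxX hx) hu huX
  refine ⟨p ++ s.tail, hp.append hs, ?_⟩
  calc 2 * {v ∈ X | v ∈ p ++ s.tail}.ncard
      ≤ 2 * {v ∈ X | v ∈ p}.ncard + 2 * {v ∈ X | v ∈ s}.ncard := by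
        have := ncard_sep_mem_append_tail_le X p s
        omega
    _ ≤ (X \ Bstar d r x).ncard + ((X \ PartClass A d r x u) ∩ Bstar d r x).ncard :=
        add_le_add hpX hsX
    _ = (X \ PartClass A d r x u).ncard :=
        ncard_sdiff_add_ncard_sdiff_inter_of_subset fun _ hv => hv.1

lemma IsCutDecomp.exists_walk_to_node (h : IsCutDecomp A r d) (hXN : ∀ v ∈ X, v ∉ d.N)
    {x : V} (hanc : Anc d r r x) (hx : x ∈ d.N) :
    ∃ p, IsWalk A p r x ∧ 2 * {v ∈ X | v ∈ p}.ncard ≤ (X \ Bstar d r x).ncard := by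
  induction hanc using Relation.ReflTransGen.head_induction_on with
  | refl =>
    have hr : {v ∈ X | v ∈ [r]} = ∅ := Set.eq_empty_of_forall_notMem fun v hv =>
      hXN v hv.1 (List.mem_singleton.mp hv.2 ▸ hx)
    exact ⟨[r], ⟨.singleton r, rfl, rfl⟩, by rw [hr, Set.ncard_empty]; exact Nat.zero_le _⟩
  | @head a c hstep _ ih =>
    obtain ⟨-, har, hpar⟩ := hstep
    have hc : c ∈ d.N := hpar ▸ h.parent_mem a hx har
    have hchild : IsChild d r a c := ⟨hx, har, hpar⟩
    have haX : a ∉ X := fun haX => hXN a haX hx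
    obtain ⟨p, hp, hpX⟩ := ih hc
    obtain ⟨q, hq, hqX⟩ :=
      h.exists_walk_extend hXN hc hp hpX ((h.child_iff c hc a).mp hchild).1 haX
    refine ⟨q, hq, ?_⟩
    rwa [h.child_part c hc a hchild, Set.sdiff_insert_of_notMem haX]

end Decomposition

theorem cutDecomp_avoid_half_general {V : Type*} [Fintype V]
    (A : V → V → Prop) (r : V)
    (d : PreDecomp V) (h : IsCutDecomp A r d)
    (u : V) (X : Set V) (hX : X ⊆ (d.N ∪ {u})ᶜ) :
    ∃ p, IsPath A p r u ∧ 2 * {x ∈ X | x ∈ p}.ncard ≤ X.ncard := by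
  have hXN : ∀ v ∈ X, v ∉ d.N := fun v hv hvN => hX hv (.inl hvN)
  have huX : u ∉ X := fun huX => hX huX (.inr rfl)
  obtain ⟨x, hx, hanc, hux⟩ : u ∈ Bstar d r r := h.cover ▸ Set.mem_univ u
  obtain ⟨p, hp, hpX⟩ := h.exists_walk_to_node hXN hanc hx
  obtain ⟨w, hw, hwX⟩ := h.exists_walk_extend hXN hx hp hpX hux huX
  obtain ⟨q, hq, hqw⟩ := hw.exists_isPath
  refine ⟨q, hq, ?_⟩
  calc 2 * {v ∈ X | v ∈ q}.ncard ≤ 2 * {v ∈ X | v ∈ w}.ncard :=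
        Nat.mul_le_mul_left 2 (ncard_sep_mem_le_of_subset X hqw)
    _ ≤ (X \ PartClass A d r x u).ncard := hwX
    _ ≤ X.ncard := Set.ncard_le_ncard Set.sdiff_subset

/-- for any target `u` and any set `X` of non-bottleneck
vertices avoiding `u`, there is a path from `r` to `u` meeting at most half
of `X`. -/
theorem cutDecomp_avoid_half {V : Type*} [Fintype V]
    (A : V → V → Prop) (r : V) (hreach : ∀ v, Reaches A r v)
    (d : PreDecomp V) (h : IsCutDecomp A r d)
    (u : V) (X : Set V) (hX : X ⊆ (d.N ∪ {u})ᶜ) :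
    ∃ p, IsPath A p r u ∧ 2 * {x ∈ X | x ∈ p}.ncard ≤ X.ncard :=
  cutDecomp_avoid_half_general A r d h u X hX

end CutPaper
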